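/- Let n ≥ 2, let 0 < t₀ ≤ t₁ ≤ … ≤ tₙ be real numbers, let φ ∈ (0, π/2], and define x_j = t_j·e^{iφ} ∈ ℍ² for 0 ≤ j ≤ n. Then τ(x₀,…,xₙ) ≥ 0. -/

import Mathlib

/-!
On the ray of angle `φ`, `d(a·e^{iφ}, b·e^{iφ}) = F(log b - log a)` for `a ≤ b`, where
`F(u) = 2 arsinh(sinh(u/2) / sin φ)`; since `sin φ ≤ 1`, `F'` is antitone and `F` is concave on
`[0, ∞)`. Appending `x_{n+1}` changes the tension by `(F(p + k) - F p) - (F(q + k) - F q)` with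
`p = log t_n - log t_{n-1} ≤ q = log t_n - log t_0` and `k = log t_{n+1} - log t_n ≥ 0`, which is
nonnegative by concavity; and a chain of three points has tension zero.
-/

open UpperHalfPlane Real Filter

/-- The tension of the chain `x 0, x 1, …, x n`:
`τ = Σ_{j=1}^{n−1} d(x_{j−1},x_{j+1}) − Σ_{j=2}^{n−1} d(x_{j−1},x_j) − d(x_0,x_n)`. -/
noncomputable def tension (n : ℕ) (x : ℕ → UpperHalfPlane) : ℝ :=
  (∑ j ∈ Finset.range (n - 1), dist (x j) (x (j + 2)))
    - (∑ j ∈ Finset.range (n - 2), dist (x (j + 1)) (x (j + 2)))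
    - dist (x 0) (x n)

/-- The Gromov product `⟨x,y⟩_z = (d(x,z)+d(z,y)−d(x,y))/2`. -/
noncomputable def gromov (x y z : UpperHalfPlane) : ℝ :=
  (dist x z + dist z y - dist x y) / 2

/-- A pair `(a,b)` is good if `a, b ≥ 0` and `sinh(a−b) > 2·sinh(a/2)`. -/
def GoodPair (a b : ℝ) : Prop :=
  0 ≤ a ∧ 0 ≤ b ∧ Real.sinh (a - b) > 2 * Real.sinh (a / 2)

/-- The chain `x 0, …, x n` is `(a,b)`-good. -/
def GoodChain (a b : ℝ) (n : ℕ) (x : ℕ → UpperHalfPlane) : Prop :=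
  (∀ j < n, dist (x (j + 1)) (x j) ≥ a) ∧
  (∀ j, 1 ≤ j → j + 1 ≤ n → gromov (x (j - 1)) (x (j + 1)) (x j) ≤ b)

theorem ConcaveOn.map_add_sub_map_le_of_le {s : Set ℝ} {f : ℝ → ℝ} (hf : ConcaveOn ℝ s f)
    {p q k : ℝ} (hp : p ∈ s) (hqk : q + k ∈ s) (hpq : p ≤ q) (hk : 0 ≤ k) :
    f (q + k) - f q ≤ f (p + k) - f p := by
  rcases (add_nonneg (sub_nonneg.2 hpq) hk).eq_or_lt with hd | hd
  · obtain rfl : p = q := by linarith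
    obtain rfl : k = 0 := by linarith
    rfl
  -- `p + k` and `q` are the convex combinations of `p` and `q + k` with swapped weights.
  have hw : (q - p) / (q - p + k) + k / (q - p + k) = 1 := by field_simp
  have hpk := hf.2 hp hqk (div_nonneg (sub_nonneg.2 hpq) hd.le) (div_nonneg hk hd.le) hw
  have hq := hf.2 hp hqk (div_nonneg hk hd.le) (div_nonneg (sub_nonneg.2 hpq) hd.le)
    (by rw [add_comm, hw])
  have e₁ : ((q - p) / (q - p + k)) • p + (k / (q - p + k)) • (q + k) = p + k := by
    simp only [smul_eq_mul]; field_simp; ring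
  have e₂ : (k / (q - p + k)) • p + ((q - p) / (q - p + k)) • (q + k) = q := by
    simp only [smul_eq_mul]; field_simp; ring
  rw [e₁] at hpk
  rw [e₂] at hq
  simp only [smul_eq_mul] at hpk hq
  linear_combination hpk + hq - (f p + f (q + k)) * hw

theorem tension_succ {n : ℕ} (hn : 2 ≤ n) (x : ℕ → UpperHalfPlane) :
    tension (n + 1) x = tension n x
      + (dist (x (n - 1)) (x (n + 1)) - dist (x (n - 1)) (x n))
      - (dist (x 0) (x (n + 1)) - dist (x 0) (x n)) := by
  obtain ⟨m, rfl⟩ := Nat.exists_eq_add_of_le hn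
  simp only [tension, show 2 + m + 1 - 1 = m + 1 + 1 by omega, show 2 + m + 1 - 2 = m + 1 by omega,
    show 2 + m - 1 = m + 1 by omega, show 2 + m - 2 = m by omega, Finset.sum_range_succ]
  ring_nf

theorem tension_nonneg_of_dist_eq {F : ℝ → ℝ} (hF : ConcaveOn ℝ (Set.Ici 0) F) {n : ℕ}
    (hn : 2 ≤ n) {x : ℕ → UpperHalfPlane} {u : ℕ → ℝ} (hu : MonotoneOn u (Set.Iic n))
    (hdist : ∀ i j, i ≤ j → j ≤ n → dist (x i) (x j) = F (u j - u i)) :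
    0 ≤ tension n x := by
  induction n, hn using Nat.le_induction with
  | base => simp [tension]
  | succ n hn ih =>
    have hu' : ∀ i j, i ≤ j → j ≤ n + 1 → u i ≤ u j := fun i j hij hj =>
      hu (by simp only [Set.mem_Iic]; omega) (by simpa using hj) hij
    have step := hF.map_add_sub_map_le_of_le (p := u n - u (n - 1)) (q := u n - u 0)
      (k := u (n + 1) - u n) (sub_nonneg.2 (hu' _ _ (by omega) (by omega)))
      (by simpa using hu' _ _ (by omega) le_rfl) (by linarith [hu' 0 (n - 1) (by omega) (by omega)])
      (sub_nonneg.2 (hu' _ _ (by omega) le_rfl))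
    rw [tension_succ hn, hdist _ _ (by omega) (by omega), hdist (n - 1) n (by omega) (by omega),
      hdist 0 (n + 1) (by omega) le_rfl, hdist 0 n (by omega) (by omega)]
    have := ih (hu.mono (Set.Iic_subset_Iic.2 n.le_succ)) fun i j hij hj => hdist i j hij (by omega)
    simp only [← sub_eq_sub_add_sub] at step
    linarith

noncomputable def rayDist (c u : ℝ) : ℝ := 2 * arsinh (sinh (u / 2) / c)

theorem sinh_half_log_sub_log {a b : ℝ} (ha : 0 < a) (hb : 0 < b) :
    sinh ((log b - log a) / 2) = (b - a) / (2 * √(a * b)) := by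
  rw [sinh_eq, sub_div (log b), exp_sub, neg_sub, exp_sub, exp_half, exp_half, exp_log ha,
    exp_log hb, Real.sqrt_mul ha.le]
  field_simp
  rw [Real.sq_sqrt ha.le, Real.sq_sqrt hb.le]

theorem UpperHalfPlane.dist_eq_rayDist {z w : ℍ} {ζ : ℂ} {a b : ℝ} (ha : 0 < a) (hab : a ≤ b)
    (hz : (z : ℂ) = a * ζ) (hw : (w : ℂ) = b * ζ) :
    dist z w = rayDist (ζ.im / ‖ζ‖) (log b - log a) := by
  have hb := ha.trans_le hab
  have hzim : z.im = a * ζ.im := by simp [← coe_im, hz]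
  have hwim : w.im = b * ζ.im := by simp [← coe_im, hw]
  have hζ : 0 < ζ.im := pos_of_mul_pos_right (hzim ▸ z.im_pos) ha.le
  have hdist : dist (z : ℂ) w = (b - a) * ‖ζ‖ := by
    rw [dist_eq_norm, hz, hw, ← sub_mul, norm_mul, ← Complex.ofReal_sub, Complex.norm_real,
      Real.norm_of_nonpos (by linarith)]
    ring
  have hsqrt : √(z.im * w.im) = √(a * b) * ζ.im := by
    rw [hzim, hwim, show a * ζ.im * (b * ζ.im) = a * b * ζ.im ^ 2 by ring,
      Real.sqrt_mul (by positivity), Real.sqrt_sq hζ.le]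
  have hnorm : 0 < ‖ζ‖ := norm_pos_iff.2 fun h => by simp [h] at hζ
  rw [dist_eq, hdist, hsqrt, rayDist, sinh_half_log_sub_log ha hb]
  congr 2
  field_simp

theorem hasDerivAt_rayDist {c : ℝ} (hc : 0 < c) (u : ℝ) :
    HasDerivAt (rayDist c) (cosh (u / 2) / √(c ^ 2 + sinh (u / 2) ^ 2)) u := by
  have h := ((((hasDerivAt_id u).div_const 2).sinh).div_const c).arsinh.const_mul 2
  refine h.congr_deriv ?_
  have hsqrt : √(1 + (sinh (u / 2) / c) ^ 2) = √(c ^ 2 + sinh (u / 2) ^ 2) / c := by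
    rw [show 1 + (sinh (u / 2) / c) ^ 2 = (c ^ 2 + sinh (u / 2) ^ 2) / c ^ 2 by field_simp,
      Real.sqrt_div' _ (by positivity), Real.sqrt_sq hc.le]
  have hpos : 0 < √(c ^ 2 + sinh (u / 2) ^ 2) := by positivity
  rw [id, hsqrt, smul_eq_mul]
  field_simp

theorem antitoneOn_deriv_rayDist {c : ℝ} (hc0 : 0 < c) (hc1 : c ≤ 1) :
    AntitoneOn (deriv (rayDist c)) (Set.Ici 0) := by
  intro u hu v hv huv
  simp only [(hasDerivAt_rayDist hc0 _).deriv]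
  have hs : 0 ≤ sinh (u / 2) := sinh_nonneg_iff.2 (by simp at hu; linarith)
  have hst : sinh (u / 2) ≤ sinh (v / 2) := sinh_le_sinh.2 (by linarith)
  rw [div_le_div_iff₀ (by positivity) (by positivity),
    ← pow_le_pow_iff_left₀ (by positivity) (by positivity) two_ne_zero, mul_pow, mul_pow,
    Real.sq_sqrt (by positivity), Real.sq_sqrt (by positivity), cosh_sq', cosh_sq']
  -- the difference of the two sides is `(1 - c²)(sinh²(v/2) - sinh²(u/2)) ≥ 0`
  nlinarith [mul_le_mul hst hst hs (hs.trans hst), sq_le_one_iff₀ hc0.le |>.2 hc1]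

theorem concaveOn_rayDist {c : ℝ} (hc0 : 0 < c) (hc1 : c ≤ 1) :
    ConcaveOn ℝ (Set.Ici 0) (rayDist c) :=
  (antitoneOn_deriv_rayDist hc0 hc1).mono interior_subset |>.concaveOn_of_deriv (convex_Ici 0)
    (fun u _ => (hasDerivAt_rayDist hc0 u).continuousAt.continuousWithinAt)
    (fun u _ => (hasDerivAt_rayDist hc0 u).differentiableAt.differentiableWithinAt)

/-- Chains lying on the ray of angle `φ` (a convex chain) have non-negative tension. -/
theorem tension_nonneg_of_ray (n : ℕ) (hn : 2 ≤ n) (t : ℕ → ℝ) (ht0 : 0 < t 0)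
    (hmono : ∀ j < n, t j ≤ t (j + 1))
    (φ : ℝ) (hφ1 : 0 < φ) (hφ2 : φ ≤ π / 2)
    (x : ℕ → UpperHalfPlane)
    (hx : ∀ j ≤ n, ((x j : ℂ)) = ((t j : ℝ) : ℂ) * Complex.exp (φ * Complex.I)) :
    0 ≤ tension n x := by
  have hsin : 0 < sin φ := sin_pos_of_pos_of_lt_pi hφ1 (by linarith [pi_pos])
  have hζ : (Complex.exp (φ * Complex.I)).im / ‖Complex.exp (φ * Complex.I)‖ = sin φ := by
    rw [Complex.exp_ofReal_mul_I_im, Complex.norm_exp_ofReal_mul_I, div_one]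
  have ht : MonotoneOn t (Set.Iic n) :=
    monotoneOn_of_le_succ Set.ordConnected_Iic fun j _ _ hj => hmono j (by simpa using hj)
  have htpos : ∀ j ∈ Set.Iic n, 0 < t j := fun j hj =>
    ht0.trans_le (ht (by simp) hj j.zero_le)
  refine tension_nonneg_of_dist_eq (concaveOn_rayDist hsin (sin_le_one φ)) hn
    (u := fun j => log (t j)) (fun i hi j hj hij => log_le_log (htpos i hi) (ht hi hj hij))
    fun i j hij hj => ?_
  rw [← hζ]
  exact UpperHalfPlane.dist_eq_rayDist (htpos i (hij.trans hj)) (ht (hij.trans hj) hj hij)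
    (hx i (hij.trans hj)) (hx j hj)
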